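/- Let V ⊆ (C∖{0})^m be defined by the principal ideal generated by a nonzero Laurent polynomial f. Define V_∞^{(c)} as the set of unit vectors ξ such that for all nonzero g in the ideal I(f), the maximum of ξ·α over the support s(g) is attained at least twice. Then V_∞^{(c)} = Sph(f). -/

import Mathlib

open Matrix Pointwise

noncomputable section

/-- Laurent polynomials in `m` variables over `ℂ`. -/
abbrev LP (m : ℕ) := AddMonoidAlgebra ℂ (Fin m → ℤ)

/-- The embedding of exponent vectors into `ℝ^m`. -/
def expR {m : ℕ} (α : Fin m → ℤ) : Fin m → ℝ := fun i => (α i : ℝ)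

/-- The Newton polytope of a Laurent polynomial. -/
def newt {m : ℕ} (f : LP m) : Set (Fin m → ℝ) :=
  convexHull ℝ (expR '' (f.coeff.support : Set (Fin m → ℤ)))

/-- The spherical dual of a subset of `ℝ^m`: unit vectors `ξ` such that the maximum
of `α ⬝ᵥ ξ` over `P` is attained at (at least) two distinct points of `P`. -/
def sph {m : ℕ} (P : Set (Fin m → ℝ)) : Set (Fin m → ℝ) :=
  {ξ | (∑ i, ξ i ^ 2) = 1 ∧ ∃ a ∈ P, ∃ b ∈ P, a ≠ b ∧
    (∀ c ∈ P, c ⬝ᵥ ξ ≤ a ⬝ᵥ ξ) ∧ (∀ c ∈ P, c ⬝ᵥ ξ ≤ b ⬝ᵥ ξ)}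

/-- The maximum of `ξ ⬝ᵥ ·` over the support of `h` is attained at least twice. -/
def attainsTwice {m : ℕ} (h : LP m) (ξ : Fin m → ℝ) : Prop :=
  ∃ α₀ ∈ h.coeff.support, ∃ α₁ ∈ h.coeff.support, α₀ ≠ α₁ ∧
    expR α₀ ⬝ᵥ ξ = expR α₁ ⬝ᵥ ξ ∧ ∀ α ∈ h.coeff.support, expR α ⬝ᵥ ξ ≤ expR α₀ ⬝ᵥ ξ

/-! ### Auxiliary lemmas -/

noncomputable instance lexLOACG (m : ℕ) : IsOrderedCancelAddMonoid (Lex (Fin m → ℤ)) :=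
  inferInstance

noncomputable instance lexLO (m : ℕ) : LinearOrder (Lex (Fin m → ℤ)) :=
  inferInstance

lemma expR_add {m : ℕ} (α β : Fin m → ℤ) : expR (α + β) = expR α + expR β := by
  funext i; simp [expR]

lemma expR_inj {m : ℕ} : Function.Injective (expR (m := m)) := by
  intro a b h
  funext i
  have : ((a i : ℝ)) = (b i : ℝ) := congrFun h i
  exact_mod_cast this

lemma dot_lin {m : ℕ} (ξ : Fin m → ℝ) : IsLinearMap ℝ (fun x : Fin m → ℝ => x ⬝ᵥ ξ) :=
  ⟨fun a b => add_dotProduct a b ξ, fun c a => smul_dotProduct c a ξ⟩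

lemma hull_le {m : ℕ} {S : Set (Fin m → ℝ)} {ξ : Fin m → ℝ} {M : ℝ}
    (h : ∀ s ∈ S, s ⬝ᵥ ξ ≤ M) {x} (hx : x ∈ convexHull ℝ S) : x ⬝ᵥ ξ ≤ M :=
  convexHull_min h (convex_halfSpace_le (dot_lin ξ) M) hx

lemma eq_of_unique_max {m : ℕ} {S : Set (Fin m → ℝ)} (hS : S.Finite) {ξ : Fin m → ℝ} {M : ℝ}
    (hb : ∀ s ∈ S, s ⬝ᵥ ξ ≤ M) {s₀ : Fin m → ℝ}
    (huniq : ∀ s ∈ S, s ⬝ᵥ ξ = M → s = s₀)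
    {x} (hx : x ∈ convexHull ℝ S) (hxM : x ⬝ᵥ ξ = M) : x = s₀ := by
  classical
  rw [hS.convexHull_eq] at hx
  obtain ⟨w, hw0, hw1, hwx⟩ := hx
  rw [Finset.centerMass_eq_of_sum_1 _ _ hw1] at hwx
  have hw0' : ∀ y ∈ hS.toFinset, 0 ≤ w y := fun y hy => hw0 y (hS.mem_toFinset.mp hy)
  have hφ : ∑ y ∈ hS.toFinset, w y * (y ⬝ᵥ ξ) = M := by
    rw [← hxM, ← hwx]
    have hmap := map_sum (IsLinearMap.mk' _ (dot_lin ξ)) (fun i => w i • (id i : Fin m → ℝ))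
      hS.toFinset
    simp only [IsLinearMap.mk'_apply] at hmap
    rw [hmap]
    refine Finset.sum_congr rfl fun y _ => ?_
    rw [smul_dotProduct, smul_eq_mul]
    rfl
  have hzero : ∑ y ∈ hS.toFinset, w y * (M - y ⬝ᵥ ξ) = 0 := by
    have : ∑ y ∈ hS.toFinset, w y * (M - y ⬝ᵥ ξ)
        = (∑ y ∈ hS.toFinset, w y) * M - ∑ y ∈ hS.toFinset, w y * (y ⬝ᵥ ξ) := by
      rw [Finset.sum_mul, ← Finset.sum_sub_distrib]
      exact Finset.sum_congr rfl fun y _ => by ring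
    rw [this, hw1, hφ, one_mul, sub_self]
  have hterm : ∀ y ∈ hS.toFinset, w y * (M - y ⬝ᵥ ξ) = 0 :=
    (Finset.sum_eq_zero_iff_of_nonneg fun y hy =>
      mul_nonneg (hw0' y hy) (sub_nonneg.mpr (hb y (hS.mem_toFinset.mp hy)))).mp hzero
  have hkey : ∀ y ∈ hS.toFinset, w y • (id y : Fin m → ℝ) = w y • s₀ := by
    intro y hy
    rcases mul_eq_zero.mp (hterm y hy) with h0 | h0
    · simp [h0]
    · have : y ⬝ᵥ ξ = M := by linarith [sub_eq_zero.mp h0]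
      rw [huniq y (hS.mem_toFinset.mp hy) this]; rfl
  calc x = ∑ y ∈ hS.toFinset, w y • (id y : Fin m → ℝ) := hwx.symm
    _ = ∑ y ∈ hS.toFinset, w y • s₀ := Finset.sum_congr rfl hkey
    _ = (∑ y ∈ hS.toFinset, w y) • s₀ := (Finset.sum_smul).symm
    _ = s₀ := by rw [hw1, one_smul]

lemma mul_apply_unique {m : ℕ} (p q : LP m) {ap aq : Fin m → ℤ}
    (h : ∀ a ∈ p.coeff.support, ∀ b ∈ q.coeff.support, a + b = ap + aq → a = ap ∧ b = aq) :
    (p * q).coeff (ap + aq) = p.coeff ap * q.coeff aq := by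
  classical
  rw [AddMonoidAlgebra.coeff_mul]
  simp_rw [Finsupp.sum]
  rw [Finset.sum_eq_single ap]
  · rw [Finset.sum_eq_single aq]
    · rw [if_pos rfl]
    · intro b _ hne
      exact if_neg fun he => hne (add_left_cancel he)
    · intro haq
      rw [if_pos rfl, Finsupp.notMem_support_iff.mp haq, mul_zero]
  · intro a ha hne
    exact Finset.sum_eq_zero fun b hb => if_neg fun he => hne (h a ha b hb he).1
  · intro hap
    refine Finset.sum_eq_zero fun b _ => ?_
    rw [Finsupp.notMem_support_iff.mp hap, zero_mul, ite_self]

lemma exists_lexTop {m : ℕ} (p : LP m) (hp : p ≠ 0) (ξ : Fin m → ℝ) :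
    ∃ a₀ ∈ p.coeff.support, (∀ a ∈ p.coeff.support, expR a ⬝ᵥ ξ ≤ expR a₀ ⬝ᵥ ξ) ∧
      ∀ a ∈ p.coeff.support, expR a ⬝ᵥ ξ = expR a₀ ⬝ᵥ ξ → toLex a ≤ toLex a₀ := by
  classical
  have hne : p.coeff.support.Nonempty := Finsupp.support_nonempty_iff.mpr (by simpa using hp)
  obtain ⟨b, hb, hbmax⟩ := p.coeff.support.exists_max_image (fun a => expR a ⬝ᵥ ξ) hne
  set T := p.coeff.support.filter (fun a => expR a ⬝ᵥ ξ = expR b ⬝ᵥ ξ) with hT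
  have hTne : T.Nonempty := ⟨b, by simp [hT, hb]⟩
  obtain ⟨a₀, ha₀, hlex⟩ := T.exists_max_image (fun a => toLex a) hTne
  rw [hT, Finset.mem_filter] at ha₀
  refine ⟨a₀, ha₀.1, ?_, ?_⟩
  · intro a ha; rw [ha₀.2]; exact hbmax a ha
  · intro a ha hval
    exact hlex a (by simp [hT, ha, hval, ha₀.2])

lemma exists_lexBot {m : ℕ} (p : LP m) (hp : p ≠ 0) (ξ : Fin m → ℝ) :
    ∃ a₀ ∈ p.coeff.support, (∀ a ∈ p.coeff.support, expR a ⬝ᵥ ξ ≤ expR a₀ ⬝ᵥ ξ) ∧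
      ∀ a ∈ p.coeff.support, expR a ⬝ᵥ ξ = expR a₀ ⬝ᵥ ξ → toLex a₀ ≤ toLex a := by
  classical
  have hne : p.coeff.support.Nonempty := Finsupp.support_nonempty_iff.mpr (by simpa using hp)
  obtain ⟨b, hb, hbmax⟩ := p.coeff.support.exists_max_image (fun a => expR a ⬝ᵥ ξ) hne
  set T := p.coeff.support.filter (fun a => expR a ⬝ᵥ ξ = expR b ⬝ᵥ ξ) with hT
  have hTne : T.Nonempty := ⟨b, by simp [hT, hb]⟩
  obtain ⟨a₀, ha₀, hlex⟩ := T.exists_min_image (fun a => toLex a) hTne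
  rw [hT, Finset.mem_filter] at ha₀
  refine ⟨a₀, ha₀.1, ?_, ?_⟩
  · intro a ha; rw [ha₀.2]; exact hbmax a ha
  · intro a ha hval
    exact hlex a (by simp [hT, ha, hval, ha₀.2])

lemma dot_add_split {m : ℕ} (a b : Fin m → ℤ) (ξ : Fin m → ℝ) :
    expR (a + b) ⬝ᵥ ξ = expR a ⬝ᵥ ξ + expR b ⬝ᵥ ξ := by
  rw [expR_add, add_dotProduct]

lemma attainsTwice_mul {m : ℕ} {f g : LP m} (hf : f ≠ 0) (hg : g ≠ 0) {ξ : Fin m → ℝ}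
    (h : attainsTwice f ξ) : attainsTwice (f * g) ξ := by
  classical
  obtain ⟨α₀, hα₀, α₁, hα₁, hne, hval, hmax⟩ := h
  obtain ⟨at', hat, hatmax, hatlex⟩ := exists_lexTop f hf ξ
  obtain ⟨ab, hab, habmax, hablex⟩ := exists_lexBot f hf ξ
  obtain ⟨bt, hbt, hbtmax, hbtlex⟩ := exists_lexTop g hg ξ
  obtain ⟨bb, hbb, hbbmax, hbblex⟩ := exists_lexBot g hg ξ
  have hMf : expR at' ⬝ᵥ ξ = expR ab ⬝ᵥ ξ := le_antisymm (habmax _ hat) (hatmax _ hab)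
  have hMg : expR bt ⬝ᵥ ξ = expR bb ⬝ᵥ ξ := le_antisymm (hbbmax _ hbt) (hbtmax _ hbb)
  -- α₀ and α₁ are maximizers of f
  have hα₀M : expR α₀ ⬝ᵥ ξ = expR at' ⬝ᵥ ξ := le_antisymm (hatmax _ hα₀) (hmax _ hat)
  have hα₁M : expR α₁ ⬝ᵥ ξ = expR at' ⬝ᵥ ξ := by rw [← hval]; exact hα₀M
  have hltlex : toLex ab < toLex at' := by
    have h0t : toLex α₀ ≤ toLex at' := hatlex _ hα₀ hα₀M
    have h1t : toLex α₁ ≤ toLex at' := hatlex _ hα₁ hα₁M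
    have h0b : toLex ab ≤ toLex α₀ := hablex _ hα₀ (by rw [hα₀M, hMf])
    have h1b : toLex ab ≤ toLex α₁ := hablex _ hα₁ (by rw [hα₁M, hMf])
    rcases lt_or_ge (toLex ab) (toLex at') with h | h
    · exact h
    · exfalso
      have e0 : toLex α₀ = toLex at' := le_antisymm h0t (h.trans h0b)
      have e1 : toLex α₁ = toLex at' := le_antisymm h1t (h.trans h1b)
      exact hne (toLex.injective (e0.trans e1.symm))
  have hbtle : toLex bb ≤ toLex bt := hbblex _ hbt hMg
  -- coefficient of at' + bt
  have hcoef1 : (f * g).coeff (at' + bt) = f.coeff at' * g.coeff bt := by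
    refine mul_apply_unique f g fun a ha b hb he => ?_
    have hda : expR a ⬝ᵥ ξ + expR b ⬝ᵥ ξ = expR at' ⬝ᵥ ξ + expR bt ⬝ᵥ ξ := by
      rw [← dot_add_split, ← dot_add_split, he]
    have h1 : expR a ⬝ᵥ ξ = expR at' ⬝ᵥ ξ := by
      have := hatmax a ha; have := hbtmax b hb; linarith
    have h2 : expR b ⬝ᵥ ξ = expR bt ⬝ᵥ ξ := by linarith [hatmax a ha, hbtmax b hb]
    have hla : toLex a ≤ toLex at' := hatlex a ha h1
    have hlb : toLex b ≤ toLex bt := hbtlex b hb h2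
    have hsum : toLex a + toLex b = toLex at' + toLex bt := congrArg toLex he
    have haeq : toLex a = toLex at' := by
      by_contra hcon
      exact absurd hsum (add_lt_add_of_lt_of_le (hla.lt_of_ne hcon) hlb).ne
    have haeq' : a = at' := toLex.injective haeq
    refine ⟨haeq', ?_⟩
    subst haeq'
    exact add_left_cancel he
  have hcoef2 : (f * g).coeff (ab + bb) = f.coeff ab * g.coeff bb := by
    refine mul_apply_unique f g fun a ha b hb he => ?_
    have hda : expR a ⬝ᵥ ξ + expR b ⬝ᵥ ξ = expR ab ⬝ᵥ ξ + expR bb ⬝ᵥ ξ := by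
      rw [← dot_add_split, ← dot_add_split, he]
    have h1 : expR a ⬝ᵥ ξ = expR ab ⬝ᵥ ξ := by
      have := habmax a ha; have := hbbmax b hb; linarith
    have h2 : expR b ⬝ᵥ ξ = expR bb ⬝ᵥ ξ := by
      have := habmax a ha; have := hbbmax b hb; linarith
    have hla : toLex ab ≤ toLex a := hablex a ha (by rw [h1])
    have hlb : toLex bb ≤ toLex b := hbblex b hb (by rw [h2])
    have hsum : toLex a + toLex b = toLex ab + toLex bb := congrArg toLex he
    have haeq : toLex a = toLex ab := by
      by_contra hcon
      exact absurd hsum.symm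
        (add_lt_add_of_lt_of_le (hla.lt_of_ne fun hh => hcon hh.symm) hlb).ne
    have haeq' : a = ab := toLex.injective haeq
    refine ⟨haeq', ?_⟩
    subst haeq'
    exact add_left_cancel he
  have hmem1 : at' + bt ∈ (f * g).coeff.support := by
    rw [Finsupp.mem_support_iff, hcoef1]
    exact mul_ne_zero (Finsupp.mem_support_iff.mp hat) (Finsupp.mem_support_iff.mp hbt)
  have hmem2 : ab + bb ∈ (f * g).coeff.support := by
    rw [Finsupp.mem_support_iff, hcoef2]
    exact mul_ne_zero (Finsupp.mem_support_iff.mp hab) (Finsupp.mem_support_iff.mp hbb)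
  refine ⟨at' + bt, hmem1, ab + bb, hmem2, ?_, ?_, ?_⟩
  · intro hcon
    have : toLex (at' + bt) = toLex (ab + bb) := congrArg toLex hcon
    have hlt : toLex ab + toLex bb < toLex at' + toLex bt :=
      add_lt_add_of_lt_of_le hltlex hbtle
    exact absurd this hlt.ne'
  · rw [dot_add_split, dot_add_split, hMf, hMg]
  · intro γ hγ
    have hγ' : γ ∈ f.coeff.support + g.coeff.support := AddMonoidAlgebra.support_coeff_mul_subset f g hγ
    obtain ⟨a, ha, b, hb, rfl⟩ := Finset.mem_add.mp hγ'
    rw [dot_add_split, dot_add_split]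
    exact add_le_add (hatmax a ha) (hbtmax b hb)

lemma attainsTwice_iff_sph {m : ℕ} {f : LP m} (hf : f ≠ 0) {ξ : Fin m → ℝ} :
    attainsTwice f ξ ↔ (∃ a ∈ newt f, ∃ b ∈ newt f, a ≠ b ∧
      (∀ c ∈ newt f, c ⬝ᵥ ξ ≤ a ⬝ᵥ ξ) ∧ (∀ c ∈ newt f, c ⬝ᵥ ξ ≤ b ⬝ᵥ ξ)) := by
  have hSsub : ∀ α ∈ f.coeff.support, expR α ∈ newt f := fun α hα =>
    subset_convexHull ℝ _ ⟨α, hα, rfl⟩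
  constructor
  · rintro ⟨α₀, h₀, α₁, h₁, hne, hval, hmax⟩
    have hbound : ∀ c ∈ newt f, c ⬝ᵥ ξ ≤ expR α₀ ⬝ᵥ ξ := by
      intro c hc
      refine hull_le ?_ hc
      rintro s ⟨α, hα, rfl⟩
      exact hmax α hα
    exact ⟨expR α₀, hSsub _ h₀, expR α₁, hSsub _ h₁, fun hcon => hne (expR_inj hcon),
      hbound, by rw [← hval]; exact hbound⟩
  · rintro ⟨a, ha, b, hb, hne, hamax, hbmax⟩
    have hsne : f.coeff.support.Nonempty := Finsupp.support_nonempty_iff.mpr (by simpa using hf)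
    obtain ⟨β, hβ, hβmax⟩ := f.coeff.support.exists_max_image (fun α => expR α ⬝ᵥ ξ) hsne
    have hboundS : ∀ s ∈ expR '' (f.coeff.support : Set (Fin m → ℤ)), s ⬝ᵥ ξ ≤ expR β ⬝ᵥ ξ := by
      rintro s ⟨α, hα, rfl⟩; exact hβmax α hα
    have haM : a ⬝ᵥ ξ = expR β ⬝ᵥ ξ :=
      le_antisymm (hull_le hboundS ha) (hamax _ (hSsub _ hβ))
    have hbM : b ⬝ᵥ ξ = expR β ⬝ᵥ ξ :=
      le_antisymm (hull_le hboundS hb) (hbmax _ (hSsub _ hβ))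
    by_cases htwo : ∃ α₁ ∈ f.coeff.support, α₁ ≠ β ∧ expR α₁ ⬝ᵥ ξ = expR β ⬝ᵥ ξ
    · obtain ⟨α₁, hα₁, hne₁, hval₁⟩ := htwo
      exact ⟨β, hβ, α₁, hα₁, fun hc => hne₁ hc.symm, hval₁.symm, hβmax⟩
    · exfalso
      push_neg at htwo
      have hfin : (expR '' (f.coeff.support : Set (Fin m → ℤ))).Finite :=
        (f.coeff.support.finite_toSet.image _)
      have huniq : ∀ s ∈ expR '' (f.coeff.support : Set (Fin m → ℤ)),
          s ⬝ᵥ ξ = expR β ⬝ᵥ ξ → s = expR β := by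
        rintro s ⟨α, hα, rfl⟩ hv
        by_cases hc : α = β
        · rw [hc]
        · exact absurd hv (htwo α hα hc)
      have ha' : a = expR β := eq_of_unique_max hfin hboundS huniq ha haM
      have hb' : b = expR β := eq_of_unique_max hfin hboundS huniq hb hbM
      exact hne (ha'.trans hb'.symm)

/-- For the variety defined by the principal ideal generated by a nonzero Laurent
polynomial f, the logarithmic limit set V_∞^{(c)} equals Sph(f). -/
theorem logLimitSet_principal_eq_sph {m : ℕ} (f : LP m) (hf : f ≠ 0) :
    {ξ : Fin m → ℝ | (∑ i, ξ i ^ 2) = 1 ∧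
        ∀ g ∈ Ideal.span ({f} : Set (LP m)), g ≠ 0 → attainsTwice g ξ} =
      sph (newt f) := by
  ext ξ
  simp only [Set.mem_setOf_eq, sph]
  constructor
  · rintro ⟨h1, h2⟩
    have hfT : attainsTwice f ξ := h2 f (Ideal.mem_span_singleton_self f) hf
    exact ⟨h1, (attainsTwice_iff_sph hf).mp hfT⟩
  · rintro ⟨h1, hsph⟩
    refine ⟨h1, fun g hg hg0 => ?_⟩
    have hfT : attainsTwice f ξ := (attainsTwice_iff_sph hf).mpr hsph
    obtain ⟨c, rfl⟩ := Ideal.mem_span_singleton.mp hg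
    have hc : c ≠ 0 := by rintro rfl; simp at hg0
    exact attainsTwice_mul hf hc hfT

end
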